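/- Let X be a finite connected pre-ordered set and R a 2-torsion free commutative ring with unity. Then every Lie triple derivation of I(X,R) is proper: L = D + F where D is a derivation of I(X,R) and F maps I(X,R) into its centre and vanishes on all second commutators. -/

import Mathlib

open IncidenceAlgebra
open scoped Classical

variable {R X : Type*}

/-- The matrix unit `e_{x y}` of the incidence algebra (zero if `¬ x ≤ y`). -/
noncomputable def matrixUnit [CommRing R] [Preorder X] [DecidableEq X] (x y : X) :
    IncidenceAlgebra R X :=
  ⟨fun u v => if u = x ∧ v = y ∧ x ≤ y then 1 else 0, fun a b hab => by
    try dsimp only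
    split_ifs with h
    · exact absurd (by rw [h.1, h.2.1]; exact h.2.2) hab
    · rfl⟩

/-- The Lie bracket `[f,g] = fg - gf`. -/
def lieBr {A : Type*} [Ring A] (f g : A) : A := f * g - g * f

/-- `L` is a Lie triple derivation of the incidence algebra. -/
def IsLieTripleDer [CommRing R] [Preorder X] [DecidableEq X] [LocallyFiniteOrder X]
    (L : IncidenceAlgebra R X →ₗ[R] IncidenceAlgebra R X) : Prop :=
  ∀ f g h : IncidenceAlgebra R X,
    L (lieBr (lieBr f g) h) =
      lieBr (lieBr (L f) g) h + lieBr (lieBr f (L g)) h + lieBr (lieBr f g) (L h)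

/-- `X` is connected: any two points are joined by a chain of comparabilities. -/
def OrdConnected' (X : Type*) [Preorder X] : Prop :=
  ∀ x y : X, Relation.ReflTransGen (fun a b : X => a ≤ b ∨ b ≤ a) x y

/-- `R` is 2-torsion free. -/
def TwoTorsionFree (R : Type*) [CommRing R] : Prop := ∀ r : R, r + r = 0 → r = 0

/-- A Lie triple derivation is proper: a derivation plus a central-valued linear map
annihilating second commutators. -/
def IsProperLTD [CommRing R] [Preorder X] [DecidableEq X] [LocallyFiniteOrder X]
    (L : IncidenceAlgebra R X →ₗ[R] IncidenceAlgebra R X) : Prop :=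
  ∃ D F : IncidenceAlgebra R X →ₗ[R] IncidenceAlgebra R X,
    (∀ f g : IncidenceAlgebra R X, D (f * g) = D f * g + f * D g) ∧
    (∀ f : IncidenceAlgebra R X, F f ∈ Set.center (IncidenceAlgebra R X)) ∧
    (∀ f g h : IncidenceAlgebra R X, F (lieBr (lieBr f g) h) = 0) ∧
    L = D + F

/-!
Write `e x y` for the matrix units. Evaluating the Lie triple identity on triples of matrix units
determines `L` entry by entry. After subtracting the inner derivation `[b, ·]`, where `b` collects
the off-diagonal entries of the `L (e t t)`, every `L (e u u)` is diagonal. Then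
`L (e x y) = σ x y • e x y` for `x ≠ y`, with `σ` additive along chains `x ≤ y ≤ z`, so that
multiplying entries by `σ` is a derivation; and `L (e x x) = d x • 1`, because the diagonal of
`L (e x x)` is constant along comparabilities, hence everywhere as `X` is connected. As `d` is
constant on the classes `x ≤ y ≤ x`, the weighted trace `f ↦ ∑ d x * f x x` vanishes on
commutators, so `f ↦ (∑ d x * f x x) • 1` is central and kills second commutators. The factors `2`
that the identity produces along the way are cancelled because `R` is 2-torsion free.
-/

theorem map_lieBr_of_leibniz {A F : Type*} [Ring A] [FunLike F A A] [AddMonoidHomClass F A A]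
    (D : F) (hD : ∀ f g : A, D (f * g) = D f * g + f * D g) (f g : A) :
    D (lieBr f g) = lieBr (D f) g + lieBr f (D g) := by
  simp only [lieBr, map_sub, hD]
  abel

theorem map_lieBr_lieBr_of_leibniz {A F : Type*} [Ring A] [FunLike F A A]
    [AddMonoidHomClass F A A] (D : F) (hD : ∀ f g : A, D (f * g) = D f * g + f * D g)
    (f g h : A) :
    D (lieBr (lieBr f g) h) =
      lieBr (lieBr (D f) g) h + lieBr (lieBr f (D g)) h + lieBr (lieBr f g) (D h) := by
  rw [map_lieBr_of_leibniz D hD, map_lieBr_of_leibniz D hD]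
  simp only [lieBr]
  noncomm_ring

section

variable [CommRing R] [Preorder X]

instance : IsZeroApply (IncidenceAlgebra R X) X (X → R) := ⟨fun _ => rfl⟩

instance : IsAddApply (IncidenceAlgebra R X) X (X → R) := ⟨fun _ _ _ => rfl⟩

def entrywiseMul (σ : X → X → R) : IncidenceAlgebra R X →ₗ[R] IncidenceAlgebra R X where
  toFun f := ⟨fun u v => σ u v * f u v, fun u v h => by rw [apply_eq_zero_of_not_le h, mul_zero]⟩
  map_add' f g := by ext; simp [mul_add]
  map_smul' r f := by ext; simp [mul_left_comm]

theorem entrywiseMul_apply (σ : X → X → R) (f : IncidenceAlgebra R X) (u v : X) :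
    entrywiseMul σ f u v = σ u v * f u v := rfl

def weightedTrace [Fintype X] (d : X → R) : IncidenceAlgebra R X →ₗ[R] R where
  toFun f := ∑ x, d x * f x x
  map_add' f g := by simp [mul_add, Finset.sum_add_distrib]
  map_smul' r f := by simp [Finset.mul_sum, mul_left_comm]

theorem weightedTrace_apply [Fintype X] (d : X → R) (f : IncidenceAlgebra R X) :
    weightedTrace d f = ∑ x, d x * f x x := rfl

variable [DecidableEq X]

theorem matrixUnit_apply (x y u v : X) :
    matrixUnit (R := R) x y u v = if u = x ∧ v = y ∧ x ≤ y then 1 else 0 := rfl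

theorem matrixUnit_of_not_le {x y : X} (h : ¬x ≤ y) :
    (matrixUnit x y : IncidenceAlgebra R X) = 0 := by
  ext s t
  simp [matrixUnit_apply, h]

theorem eq_sum_smul_matrixUnit [Fintype X] (f : IncidenceAlgebra R X) :
    f = ∑ x : X, ∑ y : X, f x y • matrixUnit x y := by
  ext u v huv
  simp [sum_apply, Finset.sum_apply, matrixUnit_apply, ite_and, huv]

theorem linearMap_ext_matrixUnit [Fintype X] {M : Type*} [AddCommMonoid M] [Module R M]
    {L L' : IncidenceAlgebra R X →ₗ[R] M}
    (h : ∀ x y : X, L (matrixUnit x y) = L' (matrixUnit x y)) : L = L' := by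
  ext f
  rw [eq_sum_smul_matrixUnit f]
  simp [map_sum, h]

theorem entrywiseMul_matrixUnit (σ : X → X → R) (x y : X) :
    entrywiseMul σ (matrixUnit x y) = σ x y • (matrixUnit x y : IncidenceAlgebra R X) := by
  ext u v
  simp only [entrywiseMul_apply, constSMul_apply, matrixUnit_apply, smul_eq_mul]
  split_ifs with h
  · rw [h.1, h.2.1]
  · rw [mul_zero, mul_zero]

theorem weightedTrace_matrixUnit [Fintype X] (d : X → R) (x y : X) :
    weightedTrace d (matrixUnit x y) = if x = y then d x else 0 := by
  simp only [weightedTrace_apply, matrixUnit_apply, mul_ite, mul_one, mul_zero]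
  split_ifs with h
  · subst h
    simp
  · exact Finset.sum_eq_zero fun z _ => if_neg fun hz => h (hz.1.symm.trans hz.2.1)

noncomputable def innerPart (L : IncidenceAlgebra R X →ₗ[R] IncidenceAlgebra R X) :
    IncidenceAlgebra R X :=
  ⟨fun s t => if s = t then 0 else L (matrixUnit t t) s t, fun s t h => by
    rw [if_neg (ne_of_not_le h), apply_eq_zero_of_not_le h]⟩

theorem innerPart_apply (L : IncidenceAlgebra R X →ₗ[R] IncidenceAlgebra R X) (s t : X) :
    innerPart L s t = if s = t then 0 else L (matrixUnit t t) s t := rfl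

def MapsDiagonalUnitsToDiagonal (L : IncidenceAlgebra R X →ₗ[R] IncidenceAlgebra R X) : Prop :=
  ∀ u s t : X, s ≠ t → L (matrixUnit u u) s t = 0

noncomputable def offDiagCoeff (L : IncidenceAlgebra R X →ₗ[R] IncidenceAlgebra R X) (x y : X) :
    R :=
  if x = y then 0 else L (matrixUnit x y) x y

end

section

variable [CommRing R] [Preorder X] [LocallyFiniteOrder X]

theorem entrywiseMul_mul {σ : X → X → R} (hσ : ∀ u z v, u ≤ z → z ≤ v → σ u v = σ u z + σ z v)
    (f g : IncidenceAlgebra R X) :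
    entrywiseMul σ (f * g) = entrywiseMul σ f * g + f * entrywiseMul σ g := by
  ext u v
  simp only [entrywiseMul_apply, mul_apply, IncidenceAlgebra.add_apply, Finset.mul_sum,
    ← Finset.sum_add_distrib]
  refine Finset.sum_congr rfl fun z hz => ?_
  rw [Finset.mem_Icc] at hz
  rw [hσ u z v hz.1 hz.2]
  ring

theorem weightedTrace_mul [Fintype X] (d : X → R) (f g : IncidenceAlgebra R X) :
    weightedTrace d (f * g) = ∑ x, ∑ z, if x ≤ z ∧ z ≤ x then d x * (f x z * g z x) else 0 := by
  simp only [weightedTrace_apply, mul_apply, Finset.mul_sum, ← Finset.sum_filter]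
  congr! 2 with x
  ext z
  simp

instance : SMulCommClass R (IncidenceAlgebra R X) (IncidenceAlgebra R X) :=
  ⟨fun r f g => by ext; simp [Finset.mul_sum, mul_left_comm]⟩

instance : IsScalarTower R (IncidenceAlgebra R X) (IncidenceAlgebra R X) :=
  ⟨fun r f g => by ext; simp [Finset.mul_sum, mul_assoc]⟩

def innerDer (b : IncidenceAlgebra R X) : IncidenceAlgebra R X →ₗ[R] IncidenceAlgebra R X :=
  LinearMap.mulLeft R b - LinearMap.mulRight R b

theorem innerDer_apply (b f : IncidenceAlgebra R X) : innerDer b f = b * f - f * b := rfl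

variable [DecidableEq X]

theorem innerDer_mul (b f g : IncidenceAlgebra R X) :
    innerDer b (f * g) = innerDer b f * g + f * innerDer b g := by
  simp only [innerDer_apply]
  noncomm_ring

theorem weightedTrace_lieBr [Fintype X] {d : X → R} (hd : ∀ x y, x ≤ y → y ≤ x → d x = d y)
    (f g : IncidenceAlgebra R X) : weightedTrace d (lieBr f g) = 0 := by
  rw [lieBr, map_sub, weightedTrace_mul, weightedTrace_mul, Finset.sum_comm, sub_eq_zero]
  refine Finset.sum_congr rfl fun x _ => Finset.sum_congr rfl fun z _ => ?_
  by_cases h : x ≤ z ∧ z ≤ x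
  · rw [if_pos h.symm, if_pos h, hd x z h.1 h.2]
    ring
  · rw [if_neg (mt And.symm h), if_neg h]

theorem mul_matrixUnit_apply (f : IncidenceAlgebra R X) (x y s t : X) :
    (f * matrixUnit x y : IncidenceAlgebra R X) s t = if t = y ∧ x ≤ y then f s x else 0 := by
  rw [mul_apply]
  split_ifs with h
  · obtain ⟨rfl, hxy⟩ := h
    rw [Finset.sum_eq_single x (fun z _ hz => by simp [matrixUnit_apply, hz]) fun hx => ?_]
    · simp [matrixUnit_apply, hxy]
    · have hsx : ¬s ≤ x := fun hsx => hx (Finset.mem_Icc.2 ⟨hsx, hxy⟩)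
      simp [apply_eq_zero_of_not_le hsx]
  · exact Finset.sum_eq_zero fun z _ => by simp [matrixUnit_apply]; tauto

theorem matrixUnit_mul_apply (f : IncidenceAlgebra R X) (x y s t : X) :
    (matrixUnit x y * f : IncidenceAlgebra R X) s t = if s = x ∧ x ≤ y then f y t else 0 := by
  rw [mul_apply]
  split_ifs with h
  · obtain ⟨rfl, hxy⟩ := h
    rw [Finset.sum_eq_single y (fun z _ hz => by simp [matrixUnit_apply, hz]) fun hy => ?_]
    · simp [matrixUnit_apply, hxy]
    · have hyt : ¬y ≤ t := fun hyt => hy (Finset.mem_Icc.2 ⟨hxy, hyt⟩)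
      simp [apply_eq_zero_of_not_le hyt]
  · exact Finset.sum_eq_zero fun z _ => by simp [matrixUnit_apply]; tauto

theorem matrixUnit_mul_matrixUnit {x y z : X} (hxy : x ≤ y) (hyz : y ≤ z) :
    (matrixUnit x y * matrixUnit y z : IncidenceAlgebra R X) = matrixUnit x z := by
  ext s t
  rw [mul_matrixUnit_apply]
  simp only [matrixUnit_apply, hxy, hyz, hxy.trans hyz, and_true]
  grind

theorem matrixUnit_mul_matrixUnit_of_ne {y u : X} (h : y ≠ u) (x v : X) :
    (matrixUnit x y * matrixUnit u v : IncidenceAlgebra R X) = 0 := by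
  ext s t
  rw [mul_matrixUnit_apply]
  simp [matrixUnit_apply, h.symm]

theorem smul_one_mem_center (r : R) :
    r • (1 : IncidenceAlgebra R X) ∈ Set.center (IncidenceAlgebra R X) :=
  Set.smul_mem_center r Set.one_mem_center

theorem IsLieTripleDer.sub_of_leibniz {L D : IncidenceAlgebra R X →ₗ[R] IncidenceAlgebra R X}
    (hL : IsLieTripleDer L) (hD : ∀ f g, D (f * g) = D f * g + f * D g) :
    IsLieTripleDer (L - D) := by
  intro f g h
  rw [LinearMap.sub_apply, hL, map_lieBr_lieBr_of_leibniz D hD]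
  simp only [LinearMap.sub_apply, lieBr]
  noncomm_ring

end

theorem OrdConnected'.eq_of_le_imp_eq [Preorder X] {β : Type*} (hconn : OrdConnected' X)
    {φ : X → β} (hφ : ∀ x y, x ≤ y → φ x = φ y) (x y : X) : φ x = φ y := by
  induction hconn x y with
  | refl => rfl
  | tail _ hstep ih => exact ih.trans (hstep.elim (hφ _ _) fun h => (hφ _ _ h).symm)

section

variable [CommRing R] [Preorder X] [DecidableEq X] [LocallyFiniteOrder X]

theorem lieBr_matrixUnit_self_of_ne {u t : X} (h : u ≠ t) :
    lieBr (matrixUnit u u) (matrixUnit t t) = (0 : IncidenceAlgebra R X) := by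
  rw [lieBr, matrixUnit_mul_matrixUnit_of_ne h, matrixUnit_mul_matrixUnit_of_ne h.symm, sub_zero]

theorem lieBr_matrixUnit_matrixUnit_right {x y : X} (hxy : x ≤ y) (hne : x ≠ y) :
    lieBr (matrixUnit x y) (matrixUnit y y) = (matrixUnit x y : IncidenceAlgebra R X) := by
  rw [lieBr, matrixUnit_mul_matrixUnit hxy le_rfl, matrixUnit_mul_matrixUnit_of_ne hne.symm,
    sub_zero]

theorem lieBr_matrixUnit_matrixUnit_left {x y : X} (hxy : x ≤ y) (hne : x ≠ y) :
    lieBr (matrixUnit x y) (matrixUnit x x) = -(matrixUnit x y : IncidenceAlgebra R X) := by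
  rw [lieBr, matrixUnit_mul_matrixUnit_of_ne hne.symm, matrixUnit_mul_matrixUnit le_rfl hxy,
    zero_sub]

theorem lieBr_lieBr_matrixUnit_matrixUnit_left {x y : X} (hxy : x ≤ y) (hne : x ≠ y) :
    lieBr (lieBr (matrixUnit x y) (matrixUnit x x)) (matrixUnit x x) =
      (matrixUnit x y : IncidenceAlgebra R X) := by
  rw [lieBr_matrixUnit_matrixUnit_left hxy hne, lieBr, neg_mul, mul_neg,
    matrixUnit_mul_matrixUnit_of_ne hne.symm, matrixUnit_mul_matrixUnit le_rfl hxy, neg_zero,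
    zero_sub, neg_neg]

end

namespace IsLieTripleDer

variable [CommRing R] [Preorder X] [DecidableEq X] [LocallyFiniteOrder X]
  {L : IncidenceAlgebra R X →ₗ[R] IncidenceAlgebra R X}

theorem apply_matrixUnit_self_apply_eq_zero (hL : IsLieTripleDer L) {u s t : X} (hst : s ≠ t)
    (hus : u ≠ s) (hut : u ≠ t) : L (matrixUnit u u) s t = 0 := by
  have E := hL (matrixUnit u u) (matrixUnit t t) (matrixUnit t t)
  rw [lieBr_matrixUnit_self_of_ne hut] at E
  have E := congrArg (· s t) E
  simp only [lieBr, map_zero, zero_mul, mul_zero, sub_zero, IncidenceAlgebra.add_apply,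
    IncidenceAlgebra.sub_apply, mul_matrixUnit_apply, matrixUnit_mul_apply] at E
  simp only [le_refl, and_true, hst, hus.symm, hut.symm, if_true, if_false, sub_zero,
    add_zero, IncidenceAlgebra.zero_apply] at E
  exact E.symm

theorem apply_matrixUnit_self_apply_add_eq_zero (hL : IsLieTripleDer L) {s t : X} (hst : s ≠ t) :
    L (matrixUnit s s) s t + L (matrixUnit t t) s t = 0 := by
  have E := hL (matrixUnit s s) (matrixUnit t t) (matrixUnit t t)
  rw [lieBr_matrixUnit_self_of_ne hst] at E
  have E := congrArg (· s t) E
  simp only [lieBr, map_zero, zero_mul, mul_zero, sub_zero, IncidenceAlgebra.add_apply,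
    IncidenceAlgebra.sub_apply, mul_matrixUnit_apply, matrixUnit_mul_apply] at E
  simp only [le_refl, and_true, hst, hst.symm, if_true, if_false, sub_zero, add_zero,
    IncidenceAlgebra.zero_apply] at E
  exact E.symm

theorem mapsDiagonalUnitsToDiagonal_sub_innerDer (hL : IsLieTripleDer L) :
    MapsDiagonalUnitsToDiagonal (L - innerDer (innerPart L)) := by
  intro u s t hst
  rw [LinearMap.sub_apply, IncidenceAlgebra.sub_apply, innerDer_apply, IncidenceAlgebra.sub_apply,
    mul_matrixUnit_apply, matrixUnit_mul_apply]
  by_cases htu : t = u <;> by_cases hsu : s = u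
  · exact absurd (hsu.trans htu.symm) hst
  · subst htu
    simp [hsu, innerPart_apply]
  · subst hsu
    simp only [le_refl, and_true, htu, if_false, if_true, innerPart_apply, Ne.symm htu, zero_sub,
      sub_neg_eq_add]
    linear_combination hL.apply_matrixUnit_self_apply_add_eq_zero hst
  · simp [htu, hsu, hL.apply_matrixUnit_self_apply_eq_zero hst (Ne.symm hsu) (Ne.symm htu)]

theorem apply_matrixUnit_apply_eq_zero_of_ne_right (hL : IsLieTripleDer L)
    (hD : MapsDiagonalUnitsToDiagonal L) {x y s t : X} (hxy : x ≤ y) (hne : x ≠ y)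
    (hsy : s ≠ y) (hty : t ≠ y) : L (matrixUnit x y) s t = 0 := by
  have E := hL (matrixUnit x y) (matrixUnit y y) (matrixUnit y y)
  rw [lieBr_matrixUnit_matrixUnit_right hxy hne, lieBr_matrixUnit_matrixUnit_right hxy hne] at E
  have E := congrArg (· s t) E
  simp only [lieBr, sub_mul, mul_sub, IncidenceAlgebra.add_apply, IncidenceAlgebra.sub_apply,
    mul_matrixUnit_apply, matrixUnit_mul_apply] at E
  simpa only [le_refl, and_true, hsy, hty, if_false, and_false, false_and, hD y y t hty.symm,
    ite_self, sub_zero, add_zero] using E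

theorem apply_matrixUnit_apply_eq_zero_of_ne_left (hL : IsLieTripleDer L)
    (hD : MapsDiagonalUnitsToDiagonal L) {x y s t : X} (hxy : x ≤ y) (hne : x ≠ y)
    (hsx : s ≠ x) (htx : t ≠ x) : L (matrixUnit x y) s t = 0 := by
  have E := hL (matrixUnit x y) (matrixUnit x x) (matrixUnit x x)
  rw [lieBr_lieBr_matrixUnit_matrixUnit_left hxy hne, lieBr_matrixUnit_matrixUnit_left hxy hne]
    at E
  have E := congrArg (· s t) E
  simp only [lieBr, neg_mul, mul_neg, sub_neg_eq_add, IncidenceAlgebra.add_apply,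
    IncidenceAlgebra.sub_apply, IncidenceAlgebra.neg_apply, mul_matrixUnit_apply,
    matrixUnit_mul_apply] at E
  simpa only [le_refl, and_true, hsx, htx, if_false, and_false, false_and, hD x s x hsx,
    ite_self, sub_zero, add_zero, neg_zero] using E

theorem apply_matrixUnit_apply_eq_zero (hL : IsLieTripleDer L)
    (hD : MapsDiagonalUnitsToDiagonal L) {x y s t : X} (hxy : x ≤ y) (hne : x ≠ y)
    (h₁ : ¬(s = x ∧ t = y)) (h₂ : ¬(s = y ∧ t = x)) : L (matrixUnit x y) s t = 0 := by
  by_cases hsy : s = y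
  · subst hsy
    exact hL.apply_matrixUnit_apply_eq_zero_of_ne_left hD hxy hne (hne.symm) fun h => h₂ ⟨rfl, h⟩
  by_cases hty : t = y
  · subst hty
    exact hL.apply_matrixUnit_apply_eq_zero_of_ne_left hD hxy hne (fun h => h₁ ⟨h, rfl⟩) (hne.symm)
  exact hL.apply_matrixUnit_apply_eq_zero_of_ne_right hD hxy hne hsy hty

theorem apply_matrixUnit_self_apply_self_eq_of_ne (hL : IsLieTripleDer L) {u x y : X}
    (hxy : x ≤ y) (hne : x ≠ y) (hux : u ≠ x) (huy : u ≠ y) :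
    L (matrixUnit u u) x x = L (matrixUnit u u) y y := by
  have E := hL (matrixUnit x y) (matrixUnit y y) (matrixUnit u u)
  have hzero : lieBr (matrixUnit x y) (matrixUnit u u) = (0 : IncidenceAlgebra R X) := by
    rw [lieBr, matrixUnit_mul_matrixUnit_of_ne huy.symm, matrixUnit_mul_matrixUnit_of_ne hux,
      sub_zero]
  rw [lieBr_matrixUnit_matrixUnit_right hxy hne, hzero, map_zero] at E
  have E := congrArg (· x y) E
  simp only [lieBr, IncidenceAlgebra.add_apply, IncidenceAlgebra.sub_apply,
    IncidenceAlgebra.zero_apply, mul_matrixUnit_apply, matrixUnit_mul_apply] at E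
  simp only [le_refl, and_true, hne, hxy, huy.symm, hux.symm, if_true, if_false,
    sub_zero, add_zero, zero_add, sub_self] at E
  linear_combination E

theorem apply_matrixUnit_self_apply_self_eq_of_le (hL : IsLieTripleDer L)
    (htf : TwoTorsionFree R) (u : X) {x y : X} (hxy : x ≤ y) :
    L (matrixUnit u u) x x = L (matrixUnit u u) y y := by
  rcases eq_or_ne x y with rfl | hne
  · rfl
  by_cases huy : u = y
  · subst huy
    have E := hL (matrixUnit x u) (matrixUnit u u) (matrixUnit u u)
    rw [lieBr_matrixUnit_matrixUnit_right hxy hne, lieBr_matrixUnit_matrixUnit_right hxy hne]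
      at E
    have E := congrArg (· x u) E
    simp only [lieBr, sub_mul, mul_sub, IncidenceAlgebra.add_apply, IncidenceAlgebra.sub_apply,
      mul_matrixUnit_apply, matrixUnit_mul_apply] at E
    simp only [le_refl, and_true, hne, hxy, if_true, if_false, ite_self, sub_zero, sub_self,
      and_self] at E
    exact sub_eq_zero.1 (htf _ (by linear_combination E))
  by_cases hux : u = x
  · subst hux
    have E := hL (matrixUnit u y) (matrixUnit u u) (matrixUnit u u)
    rw [lieBr_lieBr_matrixUnit_matrixUnit_left hxy hne, lieBr_matrixUnit_matrixUnit_left hxy hne]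
      at E
    have E := congrArg (· u y) E
    simp only [lieBr, neg_mul, mul_neg, sub_neg_eq_add, IncidenceAlgebra.add_apply,
      IncidenceAlgebra.sub_apply, IncidenceAlgebra.neg_apply, mul_matrixUnit_apply,
      matrixUnit_mul_apply] at E
    simp only [le_refl, and_true, hne, hne.symm, hxy, if_true, if_false, ite_self, sub_zero,
      zero_sub, neg_neg, sub_self, and_self] at E
    exact sub_eq_zero.1 (htf _ (by linear_combination -E))
  exact hL.apply_matrixUnit_self_apply_self_eq_of_ne hxy hne hux huy

theorem apply_matrixUnit_self_eq_smul_one (hL : IsLieTripleDer L)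
    (hD : MapsDiagonalUnitsToDiagonal L) (htf : TwoTorsionFree R) (hconn : OrdConnected' X)
    (u : X) : L (matrixUnit u u) = L (matrixUnit u u) u u • (1 : IncidenceAlgebra R X) := by
  ext s t
  rw [constSMul_apply, one_apply, smul_eq_mul]
  split_ifs with hst
  · subst hst
    rw [mul_one]
    exact hconn.eq_of_le_imp_eq (fun _ _ => hL.apply_matrixUnit_self_apply_self_eq_of_le htf u) _ _
  · rw [mul_zero, hD u s t hst]

theorem apply_matrixUnit_add_self_eq_of_le_of_le (hL : IsLieTripleDer L) {x y : X} (hxy : x ≤ y)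
    (hyx : y ≤ x) (hne : x ≠ y) :
    L (matrixUnit x y) + L (matrixUnit x y) =
      lieBr (lieBr (L (matrixUnit x y)) (matrixUnit y x)) (matrixUnit x y) +
        lieBr (lieBr (matrixUnit x y) (L (matrixUnit y x))) (matrixUnit x y) +
        lieBr (matrixUnit x x - matrixUnit y y) (L (matrixUnit x y)) := by
  have inner : lieBr (matrixUnit x y) (matrixUnit y x) =
      (matrixUnit x x - matrixUnit y y : IncidenceAlgebra R X) := by
    rw [lieBr, matrixUnit_mul_matrixUnit hxy hyx, matrixUnit_mul_matrixUnit hyx hxy]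
  have outer : lieBr (matrixUnit x x - matrixUnit y y) (matrixUnit x y) =
      (matrixUnit x y + matrixUnit x y : IncidenceAlgebra R X) := by
    rw [lieBr, sub_mul, mul_sub, matrixUnit_mul_matrixUnit le_rfl hxy,
      matrixUnit_mul_matrixUnit_of_ne hne.symm, matrixUnit_mul_matrixUnit_of_ne hne.symm,
      matrixUnit_mul_matrixUnit hxy le_rfl, sub_zero, zero_sub, sub_neg_eq_add]
  have E := hL (matrixUnit x y) (matrixUnit y x) (matrixUnit x y)
  rwa [inner, outer, map_add] at E

theorem apply_matrixUnit_apply_add_apply_swap (hL : IsLieTripleDer L)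
    (hD : MapsDiagonalUnitsToDiagonal L) (htf : TwoTorsionFree R) {x y : X} (hxy : x ≤ y)
    (hyx : y ≤ x) (hne : x ≠ y) :
    L (matrixUnit x y) x y + L (matrixUnit y x) y x = 0 := by
  have E := congrArg (· x y) (hL.apply_matrixUnit_add_self_eq_of_le_of_le hxy hyx hne)
  simp only [lieBr, sub_mul, mul_sub, IncidenceAlgebra.add_apply, IncidenceAlgebra.sub_apply,
    mul_matrixUnit_apply, matrixUnit_mul_apply] at E
  simp only [le_refl, and_true, and_self, hxy, hyx, hne, hne.symm, if_true, ite_self, sub_zero,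
    zero_sub, hL.apply_matrixUnit_apply_eq_zero_of_ne_right hD hxy hne hne hne,
    hL.apply_matrixUnit_apply_eq_zero_of_ne_left hD hxy hne hne.symm hne.symm,
    hL.apply_matrixUnit_apply_eq_zero_of_ne_right hD hyx hne.symm hne.symm hne.symm,
    hL.apply_matrixUnit_apply_eq_zero_of_ne_left hD hyx hne.symm hne hne] at E
  exact htf _ (by linear_combination -E)

theorem apply_matrixUnit_apply_swap_eq_zero (hL : IsLieTripleDer L)
    (hD : MapsDiagonalUnitsToDiagonal L) (htf : TwoTorsionFree R) {x y : X} (hxy : x ≤ y)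
    (hyx : y ≤ x) (hne : x ≠ y) : L (matrixUnit x y) y x = 0 := by
  have E := congrArg (· y x) (hL.apply_matrixUnit_add_self_eq_of_le_of_le hxy hyx hne)
  simp only [lieBr, sub_mul, mul_sub, IncidenceAlgebra.add_apply, IncidenceAlgebra.sub_apply,
    mul_matrixUnit_apply, matrixUnit_mul_apply] at E
  simp only [le_refl, and_true, and_self, hxy, hyx, hne, hne.symm, if_true, if_false, ite_self,
    sub_zero, zero_sub, add_zero, zero_add, sub_self,
    hL.apply_matrixUnit_apply_eq_zero_of_ne_right hD hxy hne hne hne,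
    hL.apply_matrixUnit_apply_eq_zero_of_ne_left hD hxy hne hne.symm hne.symm] at E
  -- `E` says `4 * L (e x y) y x = 0`
  exact htf _ (htf _ (by linear_combination E))

theorem apply_matrixUnit_eq_smul (hL : IsLieTripleDer L) (hD : MapsDiagonalUnitsToDiagonal L)
    (htf : TwoTorsionFree R) {x y : X} (hne : x ≠ y) :
    L (matrixUnit x y) = L (matrixUnit x y) x y • (matrixUnit x y : IncidenceAlgebra R X) := by
  by_cases hxy : x ≤ y
  swap
  · rw [matrixUnit_of_not_le hxy, map_zero, smul_zero]
  ext s t hst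
  rw [constSMul_apply, matrixUnit_apply, smul_eq_mul]
  by_cases h₁ : s = x ∧ t = y
  · obtain ⟨rfl, rfl⟩ := h₁
    simp [hxy]
  rw [if_neg fun h => h₁ ⟨h.1, h.2.1⟩, mul_zero]
  by_cases h₂ : s = y ∧ t = x
  · obtain ⟨rfl, rfl⟩ := h₂
    exact hL.apply_matrixUnit_apply_swap_eq_zero hD htf hxy hst hne
  exact hL.apply_matrixUnit_apply_eq_zero hD hxy hne h₁ h₂

theorem apply_matrixUnit_apply_trans (hL : IsLieTripleDer L) (htf : TwoTorsionFree R)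
    {x y z : X} (hxy : x ≤ y) (hyz : y ≤ z) (hnxy : x ≠ y) (hnyz : y ≠ z) (hnxz : x ≠ z) :
    L (matrixUnit x z) x z = L (matrixUnit x y) x y + L (matrixUnit y z) y z := by
  have inner : lieBr (matrixUnit x y) (matrixUnit y z) =
      (matrixUnit x z : IncidenceAlgebra R X) := by
    rw [lieBr, matrixUnit_mul_matrixUnit hxy hyz, matrixUnit_mul_matrixUnit_of_ne hnxz.symm,
      sub_zero]
  have E := hL (matrixUnit x y) (matrixUnit y z) (matrixUnit z z)
  rw [inner, lieBr_matrixUnit_matrixUnit_right (hxy.trans hyz) hnxz] at E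
  have E := congrArg (· x z) E
  simp only [lieBr, sub_mul, mul_sub, IncidenceAlgebra.add_apply, IncidenceAlgebra.sub_apply,
    mul_matrixUnit_apply, matrixUnit_mul_apply] at E
  simp only [le_refl, and_true, and_self, hxy, hyz, hxy.trans hyz, hnxy, hnxz, hnyz.symm,
    hnxz.symm, if_true, if_false, ite_self, sub_zero, sub_self] at E
  linear_combination E - hL.apply_matrixUnit_self_apply_self_eq_of_le htf z (hxy.trans hyz)

theorem apply_matrixUnit_self_apply_self_eq_of_le_of_le (hL : IsLieTripleDer L)
    (hD : MapsDiagonalUnitsToDiagonal L) (htf : TwoTorsionFree R) {x y : X} (hxy : x ≤ y)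
    (hyx : y ≤ x) : L (matrixUnit x x) x x = L (matrixUnit y y) y y := by
  rcases eq_or_ne x y with rfl | hne
  · rfl
  have inner : lieBr (matrixUnit x x) (matrixUnit x y) =
      (matrixUnit x y : IncidenceAlgebra R X) := by
    rw [lieBr, matrixUnit_mul_matrixUnit le_rfl hxy, matrixUnit_mul_matrixUnit_of_ne hne.symm,
      sub_zero]
  have inner2 : lieBr (matrixUnit x y) (matrixUnit y x) =
      (matrixUnit x x - matrixUnit y y : IncidenceAlgebra R X) := by
    rw [lieBr, matrixUnit_mul_matrixUnit hxy hyx, matrixUnit_mul_matrixUnit hyx hxy]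
  have E := hL (matrixUnit x x) (matrixUnit x y) (matrixUnit y x)
  rw [inner, inner2, map_sub] at E
  have E := congrArg (· x x) E
  simp only [lieBr, sub_mul, mul_sub, IncidenceAlgebra.add_apply, IncidenceAlgebra.sub_apply,
    mul_matrixUnit_apply, matrixUnit_mul_apply] at E
  simp only [le_refl, and_true, and_self, hxy, hyx, hne, hne.symm, if_true, if_false, ite_self,
    sub_zero, sub_self] at E
  linear_combination E + hL.apply_matrixUnit_self_apply_self_eq_of_le htf y hxy +
    hL.apply_matrixUnit_self_apply_self_eq_of_le htf x hxy +
    hL.apply_matrixUnit_apply_add_apply_swap hD htf hxy hyx hne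

theorem offDiagCoeff_add (hL : IsLieTripleDer L) (hD : MapsDiagonalUnitsToDiagonal L)
    (htf : TwoTorsionFree R) {u z v : X} (huz : u ≤ z) (hzv : z ≤ v) :
    offDiagCoeff L u v = offDiagCoeff L u z + offDiagCoeff L z v := by
  unfold offDiagCoeff
  by_cases h₁ : u = z
  · subst h₁
    simp
  by_cases h₂ : z = v
  · subst h₂
    simp
  by_cases h₃ : u = v
  · subst h₃
    rw [if_pos rfl, if_neg h₁, if_neg h₂,
      hL.apply_matrixUnit_apply_add_apply_swap hD htf huz hzv h₁]
  rw [if_neg h₁, if_neg h₂, if_neg h₃]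
  exact hL.apply_matrixUnit_apply_trans htf huz hzv h₁ h₂ h₃

theorem eq_entrywiseMul_add_smulRight [Fintype X] (hL : IsLieTripleDer L)
    (hD : MapsDiagonalUnitsToDiagonal L) (htf : TwoTorsionFree R) (hconn : OrdConnected' X) :
    L = entrywiseMul (offDiagCoeff L) +
      (weightedTrace fun x => L (matrixUnit x x) x x).smulRight 1 := by
  refine linearMap_ext_matrixUnit fun x y => ?_
  rw [LinearMap.add_apply, LinearMap.smulRight_apply, entrywiseMul_matrixUnit,
    weightedTrace_matrixUnit, offDiagCoeff]
  rcases eq_or_ne x y with rfl | hne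
  · rw [if_pos rfl, if_pos rfl, zero_smul, zero_add]
    exact hL.apply_matrixUnit_self_eq_smul_one hD htf hconn x
  · rw [if_neg hne, if_neg hne, zero_smul, add_zero]
    exact hL.apply_matrixUnit_eq_smul hD htf hne

end IsLieTripleDer

/-- Every Lie triple derivation of the incidence algebra of a finite
connected pre-ordered set over a 2-torsion free commutative ring is proper. -/
theorem lieTripleDer_proper_finite_connected [CommRing R] [Preorder X] [DecidableEq X]
    [Fintype X] [LocallyFiniteOrder X]
    (htf : TwoTorsionFree R) (hconn : OrdConnected' X)
    (L : IncidenceAlgebra R X →ₗ[R] IncidenceAlgebra R X) (hL : IsLieTripleDer L) :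
    IsProperLTD L := by
  set b := innerPart L
  set L₁ := L - innerDer b
  have hL₁ : IsLieTripleDer L₁ := hL.sub_of_leibniz (innerDer_mul b)
  have hD : MapsDiagonalUnitsToDiagonal L₁ := hL.mapsDiagonalUnitsToDiagonal_sub_innerDer
  refine ⟨innerDer b + entrywiseMul (offDiagCoeff L₁),
    (weightedTrace fun x => L₁ (matrixUnit x x) x x).smulRight 1, fun f g => ?_,
    fun f => smul_one_mem_center _, fun f g h => ?_, ?_⟩
  · simp only [LinearMap.add_apply, innerDer_mul,
      entrywiseMul_mul fun _ _ _ => hL₁.offDiagCoeff_add hD htf, add_mul, mul_add]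
    abel
  · rw [LinearMap.smulRight_apply, weightedTrace_lieBr (fun x y hxy hyx =>
      hL₁.apply_matrixUnit_self_apply_self_eq_of_le_of_le hD htf hxy hyx), zero_smul]
  · rw [add_assoc, ← hL₁.eq_entrywiseMul_add_smulRight hD htf hconn, add_sub_cancel]
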